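/- arXiv:2406.00499 — 3 statements merged into one kernel-verified Lean document; each statement's English description precedes it below -/
import Mathlib

section
/- Let γ > 0 be a real constant and let X = ℝⁿ \ {0}. The Gaussian Cosine kernel k_GC(x,y) = exp(−γ·(1 − ⟨x,y⟩/(‖x‖·‖y‖))) is a Mercer kernel on X. -/
open scoped RealInnerProductSpace

/-!
Normalising the points, the kernel matrix is `exp (-γ)` times the entrywise exponential of
`γ` times a Gram matrix. Entrywise powers of a positive semidefinite matrix are positive
semidefinite by the Schur product theorem, and the entrywise exponential is a limit of
nonnegative combinations of them, so it lies in the closed cone of positive semidefinite matrices.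
-/

def IsMercerKernel {n : ℕ} (X : Set (EuclideanSpace ℝ (Fin n)))
    (k : EuclideanSpace ℝ (Fin n) → EuclideanSpace ℝ (Fin n) → ℝ) : Prop :=
  (∀ x ∈ X, ∀ y ∈ X, k x y = k y x) ∧
  ∀ (m : ℕ) (x : Fin m → EuclideanSpace ℝ (Fin n)), (∀ i, x i ∈ X) →
    (Matrix.of fun i j => k (x i) (x j)).PosSemidef

namespace Matrix

open scoped ComplexOrder

variable {ι 𝕜 : Type*} [Fintype ι] [RCLike 𝕜]

theorem isClosed_setOf_posSemidef : IsClosed {A : Matrix ι ι 𝕜 | A.PosSemidef} := by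
  simp only [posSemidef_iff_dotProduct_mulVec, IsHermitian, Set.ofPred_and, Set.ofPred_forall]
  refine (isClosed_eq continuous_id.matrix_conjTranspose continuous_id).inter
    (isClosed_iInter fun x => isClosed_le continuous_const ?_)
  exact continuous_const.dotProduct (continuous_id.matrix_mulVec continuous_const)

theorem PosSemidef.map_pow {A : Matrix ι ι 𝕜} (hA : A.PosSemidef) (k : ℕ) :
    (A.map (· ^ k)).PosSemidef := by
  induction k with
  | zero =>
    convert posSemidef_vecMulVec_self_star (fun _ : ι => (1 : 𝕜)) using 1
    ext; simp [vecMulVec_apply]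
  | succ k ih =>
    convert ih.hadamard hA using 1
    ext; simp [pow_succ]

theorem PosSemidef.map_exp {A : Matrix ι ι ℝ} (hA : A.PosSemidef) :
    (A.map Real.exp).PosSemidef := by
  have hasSum : HasSum (fun k : ℕ => (k.factorial : ℝ)⁻¹ • A.map (· ^ k)) (A.map Real.exp) :=
    Pi.hasSum.2 fun i => Pi.hasSum.2 fun j => by
      simpa [Real.exp_eq_exp_ℝ, div_eq_inv_mul] using
        NormedSpace.expSeries_div_hasSum_exp (A i j)
  refine isClosed_setOf_posSemidef.mem_of_tendsto hasSum.tendsto_sum_nat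
    (Filter.Eventually.of_forall fun N => posSemidef_sum (Finset.range N) fun k _ => ?_)
  exact (hA.map_pow k).smul (by positivity)

end Matrix

theorem exp_gaussianCosine_eq_mul_exp_inner {E : Type*} [NormedAddCommGroup E]
    [InnerProductSpace ℝ E] (γ : ℝ) (x y : E) :
    Real.exp (-γ * (1 - ⟪x, y⟫ / (‖x‖ * ‖y‖)))
      = Real.exp (-γ) * Real.exp (γ * ⟪‖x‖⁻¹ • x, ‖y‖⁻¹ • y⟫) := by
  rw [← Real.exp_add, real_inner_smul_left, real_inner_smul_right, div_eq_mul_inv, mul_inv]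
  ring_nf

/-- The Gaussian Cosine kernel
`k_GC(x,y) = exp (−γ (1 − ⟨x,y⟩ / (‖x‖‖y‖)))`, `γ > 0`, is a Mercer kernel on
`ℝⁿ \ {0}`. -/
theorem isMercerKernel_gaussianCosine {n : ℕ} (γ : ℝ) (hγ : 0 < γ) :
    IsMercerKernel {x : EuclideanSpace ℝ (Fin n) | x ≠ 0}
      (fun x y => Real.exp (-γ * (1 - ⟪x, y⟫ / (‖x‖ * ‖y‖)))) := by
  refine ⟨fun x _ y _ => by simp only [real_inner_comm x, mul_comm ‖x‖], fun m x _ => ?_⟩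
  have hK : (Matrix.of fun i j => Real.exp (-γ * (1 - ⟪x i, x j⟫ / (‖x i‖ * ‖x j‖))))
      = Real.exp (-γ) • (γ • Matrix.gram ℝ fun i => ‖x i‖⁻¹ • x i).map Real.exp := by
    ext i j
    simp only [Matrix.of_apply, Matrix.smul_apply, Matrix.map_apply, Matrix.gram_apply,
      exp_gaussianCosine_eq_mul_exp_inner, smul_eq_mul]
  rw [hK]
  exact (((Matrix.posSemidef_gram ℝ _).smul hγ.le).map_exp).smul (Real.exp_pos _).le
end

section
/- Let γ > 0 and let k_GC(x,y) = exp(−γ·(1 − ⟨x,y⟩/(‖x‖·‖y‖))) on nonzero vectors of ℝⁿ. The Riemannian metric induced by k_GC, given by g_ij(x) = ∂²k_GC(x,y)/∂x_i ∂y_j |_{y=x}, exists and equals g_ij(x) = (γ/‖x‖²)·(δ_ij − x_i·x_j/‖x‖²) for every nonzero x ∈ ℝⁿ and all indices i, j; in particular, for unit vectors ‖x‖ = 1 it equals γ·(δ_ij − x_i·x_j). -/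
open scoped RealInnerProductSpace

/-- The Gaussian Cosine kernel `k_GC(x,y) = exp (−γ (1 − ⟨x,y⟩ / (‖x‖‖y‖)))`. -/
noncomputable def kGC {n : ℕ} (γ : ℝ) (x y : EuclideanSpace ℝ (Fin n)) : ℝ :=
  Real.exp (-γ * (1 - ⟪x, y⟫ / (‖x‖ * ‖y‖)))

/-!
Moving the first argument along `t ↦ x + t • u`, the cosine `⟪x + t • u, y⟫ / (‖x + t • u‖ ‖y‖)`
has derivative `⟪y, w⟫ / (‖x‖ ‖y‖)` at `t = 0`, where `w = u - (⟪x, u⟫ / ‖x‖²) • x` is the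
component of `u` orthogonal to `x`. Hence at `t = 0`, `∂ₜ k_GC(x + t • u, y) = γ ⟪y, w⟫ / (‖x‖ ‖y‖) · k_GC(x, y)`.
Along `y = x + s • v` the factor `⟪y, w⟫` vanishes at `s = 0`, so only its own derivative survives
the product rule, and with `k_GC(x, x) = 1` the mixed derivative is `γ ⟪v, w⟫ / ‖x‖²`.
-/

section InnerProductSpace

variable {E : Type*} [NormedAddCommGroup E] [InnerProductSpace ℝ E]

theorem hasDerivAt_add_smul (x u : E) : HasDerivAt (fun t : ℝ => x + t • u) u 0 := by
  simpa using ((hasDerivAt_id (0 : ℝ)).smul_const u).const_add x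

theorem hasDerivAt_norm_add_smul {x : E} (hx : x ≠ 0) (u : E) :
    HasDerivAt (fun t : ℝ => ‖x + t • u‖) (⟪x, u⟫ / ‖x‖) 0 := by
  have h := (hasDerivAt_add_smul x u).norm_sq.sqrt (by simpa using hx)
  simp only [Real.sqrt_sq (norm_nonneg _)] at h
  refine h.congr_deriv ?_
  simp only [zero_smul, add_zero]
  ring

theorem hasDerivAt_inner_div_norm_add_smul {x : E} (hx : x ≠ 0) (u y : E) :
    HasDerivAt (fun t : ℝ => ⟪x + t • u, y⟫ / ‖x + t • u‖)
      ((⟪u, y⟫ - ⟪x, u⟫ * ⟪x, y⟫ / ‖x‖ ^ 2) / ‖x‖) 0 := by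
  have hnum : HasDerivAt (fun t : ℝ => ⟪x + t • u, y⟫) ⟪u, y⟫ 0 := by
    simpa [inner_add_left, real_inner_smul_left] using
      ((hasDerivAt_id (0 : ℝ)).mul_const ⟪u, y⟫).const_add ⟪x, y⟫
  have hx' : ‖x‖ ≠ 0 := norm_ne_zero_iff.2 hx
  refine (hnum.fun_div (hasDerivAt_norm_add_smul hx u) (by simpa using hx)).congr_deriv ?_
  simp only [zero_smul, add_zero]
  field_simp

end InnerProductSpace

section GaussianCosine

variable {n : ℕ} (γ : ℝ)

theorem kGC_comm (x y : EuclideanSpace ℝ (Fin n)) : kGC γ x y = kGC γ y x := by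
  rw [kGC, kGC, real_inner_comm, mul_comm ‖x‖]

theorem kGC_self {x : EuclideanSpace ℝ (Fin n)} (hx : x ≠ 0) : kGC γ x x = 1 := by
  have hx' : ‖x‖ ≠ 0 := norm_ne_zero_iff.2 hx
  rw [kGC, real_inner_self_eq_norm_mul_norm, div_self (mul_ne_zero hx' hx'), sub_self, mul_zero,
    Real.exp_zero]

theorem hasDerivAt_kGC_add_smul_left {x : EuclideanSpace ℝ (Fin n)} (hx : x ≠ 0)
    (u y : EuclideanSpace ℝ (Fin n)) :
    HasDerivAt (fun t : ℝ => kGC γ (x + t • u) y)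
      (γ * ((⟪u, y⟫ - ⟪x, u⟫ * ⟪x, y⟫ / ‖x‖ ^ 2) / ‖x‖ / ‖y‖) * kGC γ x y) 0 := by
  simp only [kGC, ← div_div]
  refine ((((hasDerivAt_inner_div_norm_add_smul hx u y).div_const ‖y‖).const_sub 1).const_mul
    (-γ)).exp.congr_deriv ?_
  simp only [zero_smul, add_zero]
  ring

theorem hasDerivAt_deriv_kGC_add_smul {x : EuclideanSpace ℝ (Fin n)} (hx : x ≠ 0)
    (u v : EuclideanSpace ℝ (Fin n)) :
    HasDerivAt (fun s : ℝ => deriv (fun t : ℝ => kGC γ (x + t • u) (x + s • v)) 0)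
      (γ / ‖x‖ ^ 2 * (⟪u, v⟫ - ⟪x, u⟫ * ⟪x, v⟫ / ‖x‖ ^ 2)) 0 := by
  set w := u - (⟪x, u⟫ / ‖x‖ ^ 2) • x
  have hw (y : EuclideanSpace ℝ (Fin n)) : ⟪u, y⟫ - ⟪x, u⟫ * ⟪x, y⟫ / ‖x‖ ^ 2 = ⟪y, w⟫ := by
    rw [inner_sub_right, real_inner_smul_right, real_inner_comm u y, real_inner_comm x y]
    ring
  have hxw : ⟪x, w⟫ = 0 := by
    rw [← hw, real_inner_self_eq_norm_sq, real_inner_comm, mul_div_assoc,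
      div_self (pow_ne_zero 2 (norm_ne_zero_iff.2 hx)), mul_one, sub_self]
  have hderiv : (fun s : ℝ => deriv (fun t : ℝ => kGC γ (x + t • u) (x + s • v)) 0) =
      fun s => γ * (⟪x + s • v, w⟫ / ‖x + s • v‖) / ‖x‖ * kGC γ x (x + s • v) := by
    funext s
    rw [(hasDerivAt_kGC_add_smul_left γ hx u _).deriv, hw]
    ring
  have hcos := hasDerivAt_inner_div_norm_add_smul hx v w
  rw [hxw, mul_zero, zero_div, sub_zero] at hcos
  have hk : DifferentiableAt ℝ (fun s : ℝ => kGC γ x (x + s • v)) 0 := by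
    simpa only [kGC_comm γ x] using (hasDerivAt_kGC_add_smul_left γ hx v x).differentiableAt
  rw [hderiv]
  refine (((hcos.const_mul γ).div_const ‖x‖).mul hk.hasDerivAt).congr_deriv ?_
  simp only [zero_smul, add_zero, hxw, kGC_self γ hx]
  rw [← hw v, real_inner_comm v u]
  field_simp
  ring

end GaussianCosine

theorem gaussianCosine_inducedMetric_general {n : ℕ} (γ : ℝ)
    (x : EuclideanSpace ℝ (Fin n)) (hx : x ≠ 0) (i j : Fin n) :
    HasDerivAt
      (fun s : ℝ =>
        deriv (fun t : ℝ =>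
          kGC γ (x + t • EuclideanSpace.single i (1 : ℝ))
            (x + s • EuclideanSpace.single j (1 : ℝ))) 0)
      (γ / ‖x‖ ^ 2 * ((if i = j then (1 : ℝ) else 0) - x i * x j / ‖x‖ ^ 2)) 0 ∧
    (‖x‖ = 1 →
      γ / ‖x‖ ^ 2 * ((if i = j then (1 : ℝ) else 0) - x i * x j / ‖x‖ ^ 2) =
        γ * ((if i = j then (1 : ℝ) else 0) - x i * x j)) := by
  refine ⟨?_, fun h => by rw [h]; simp⟩
  simpa [EuclideanSpace.inner_single_left, EuclideanSpace.inner_single_right, eq_comm] using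
    hasDerivAt_deriv_kGC_add_smul γ hx (EuclideanSpace.single i 1) (EuclideanSpace.single j 1)

/-- The Riemannian metric induced by the Gaussian Cosine kernel,
`g_ij(x) = ∂²k_GC(x,y)/∂x_i∂y_j |_{y=x}`, exists and equals
`(γ/‖x‖²)(δ_ij − x_i x_j/‖x‖²)` for every nonzero `x`; in particular for unit
vectors it equals `γ(δ_ij − x_i x_j)`. -/
theorem gaussianCosine_inducedMetric {n : ℕ} (γ : ℝ) (hγ : 0 < γ)
    (x : EuclideanSpace ℝ (Fin n)) (hx : x ≠ 0) (i j : Fin n) :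
    HasDerivAt
      (fun s : ℝ =>
        deriv (fun t : ℝ =>
          kGC γ (x + t • EuclideanSpace.single i (1 : ℝ))
            (x + s • EuclideanSpace.single j (1 : ℝ))) 0)
      (γ / ‖x‖ ^ 2 * ((if i = j then (1 : ℝ) else 0) - x i * x j / ‖x‖ ^ 2)) 0 ∧
    (‖x‖ = 1 →
      γ / ‖x‖ ^ 2 * ((if i = j then (1 : ℝ) else 0) - x i * x j / ‖x‖ ^ 2) =
        γ * ((if i = j then (1 : ℝ) else 0) - x i * x j)) :=
  gaussianCosine_inducedMetric_general γ x hx i j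
end

section
/- Let X ⊆ ℝⁿ be open, let k : X × X → ℝ be a symmetric C² kernel, and let D : X → ℝ be C¹. Define the conformally transformed kernel k̃(x,y) = D(x)·D(y)·k(x,y), the induced metric g_ij(x) = ∂²k(x,y)/∂x_i ∂y_j |_{y=x}, the derivatives D_i(x) = ∂D/∂x_i (x), and k_i(x,x) = ∂k(x,y)/∂x_i |_{y=x}. Then the metric induced by k̃ satisfies, for all x ∈ X and all indices i, j: g̃_ij(x) = D(x)²·g_ij(x) + D_i(x)·D_j(x)·k(x,x) + D(x)·(D_i(x)·k_j(x,x) + D_j(x)·k_i(x,x)). -/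
/-- Partial derivative of a two-variable kernel with respect to the `i`-th
coordinate of the first argument: `∂k(x,y)/∂x_i`. -/
noncomputable def pderivFst {n : ℕ} (k : (Fin n → ℝ) → (Fin n → ℝ) → ℝ)
    (i : Fin n) (x y : Fin n → ℝ) : ℝ :=
  deriv (fun t : ℝ => k (x + t • (Pi.single i 1 : Fin n → ℝ)) y) 0

/-- Partial derivative of a scalar function: `D_i(x) = ∂D(x)/∂x_i`. -/
noncomputable def pderiv' {n : ℕ} (D : (Fin n → ℝ) → ℝ) (i : Fin n)
    (x : Fin n → ℝ) : ℝ :=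
  deriv (fun t : ℝ => D (x + t • (Pi.single i 1 : Fin n → ℝ))) 0

/-- The Riemannian metric induced by a kernel `k`:
`g_ij(x) = ∂²k(x,y)/∂x_i∂y_j` evaluated at `y = x`. -/
noncomputable def inducedMetric {n : ℕ} (k : (Fin n → ℝ) → (Fin n → ℝ) → ℝ)
    (i j : Fin n) (x : Fin n → ℝ) : ℝ :=
  deriv (fun s : ℝ => pderivFst k i x (x + s • (Pi.single j 1 : Fin n → ℝ))) 0

/-! Every partial derivative in the statement is a line derivative along a coordinate vector.
For `y` near `x` the product rule gives
`∂ₓᵢ k̃(x,y) = D(y) (Dᵢ(x) k(x,y) + D(x) ∂ₓᵢ k(x,y))`, and differentiating this in `yⱼ` at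
`y = x`, again by the product rule, yields the formula once symmetry of `k` has turned
`∂_{yⱼ} k(x,x)` into `kⱼ(x,x)`. That `y ↦ ∂ₓᵢ k(x,y)` is differentiable at `x` comes from
`k ∈ C²`, since `∂ₓᵢ k(x,y) = Dk(x,y)(eᵢ,0)` near `(x,x)`. -/

open Filter Topology

section LineDeriv

variable {𝕜 E : Type*} [NontriviallyNormedField 𝕜] [AddCommGroup E] [Module 𝕜 E]
  {f g : E → 𝕜} {a b : 𝕜} {x v : E}

theorem HasLineDerivAt.mul (hf : HasLineDerivAt 𝕜 f a x v) (hg : HasLineDerivAt 𝕜 g b x v) :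
    HasLineDerivAt 𝕜 (fun u => f u * g u) (a * g x + f x * b) x v := by
  simpa only [HasLineDerivAt, zero_smul, add_zero] using HasDerivAt.fun_mul hf hg

theorem HasLineDerivAt.add (hf : HasLineDerivAt 𝕜 f a x v) (hg : HasLineDerivAt 𝕜 g b x v) :
    HasLineDerivAt 𝕜 (fun u => f u + g u) (a + b) x v :=
  HasDerivAt.add hf hg

theorem HasLineDerivAt.const_mul (c : 𝕜) (hf : HasLineDerivAt 𝕜 f a x v) :
    HasLineDerivAt 𝕜 (fun u => c * f u) (c * a) x v :=
  HasDerivAt.const_mul c hf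

theorem HasLineDerivAt.mul_const (hf : HasLineDerivAt 𝕜 f a x v) (c : 𝕜) :
    HasLineDerivAt 𝕜 (fun u => f u * c) (a * c) x v :=
  HasDerivAt.mul_const hf c

end LineDeriv

section Kernel

variable {𝕜 E : Type*} [NontriviallyNormedField 𝕜] [NormedAddCommGroup E] [NormedSpace 𝕜 E]
  {k : E → E → 𝕜} {D : E → 𝕜} {x y v w : E}

theorem DifferentiableAt.hasLineDerivAt_fst
    (h : DifferentiableAt 𝕜 (fun p : E × E => k p.1 p.2) (x, y)) :
    HasLineDerivAt 𝕜 (k · y) (fderiv 𝕜 (fun p : E × E => k p.1 p.2) (x, y) (v, 0)) x v := by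
  exact (h.hasFDerivAt.comp x (hasFDerivAt_prodMk_left (𝕜 := 𝕜) x y)).hasLineDerivAt v

theorem ContDiffAt.eventually_hasLineDerivAt_fst
    (h : ContDiffAt 𝕜 2 (fun p : E × E => k p.1 p.2) (x, y)) :
    ∀ᶠ y' in 𝓝 y,
      HasLineDerivAt 𝕜 (k · y') (fderiv 𝕜 (fun p : E × E => k p.1 p.2) (x, y') (v, 0)) x v := by
  have hpair : Tendsto (fun y' => (x, y')) (𝓝 y) (𝓝 (x, y)) :=
    (continuous_const.prodMk continuous_id).tendsto y
  filter_upwards [hpair.eventually (h.eventually (by simp))] with y' hy'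
  exact (hy'.differentiableAt (by norm_num)).hasLineDerivAt_fst

theorem ContDiffAt.differentiableAt_lineDeriv_fst
    (h : ContDiffAt 𝕜 2 (fun p : E × E => k p.1 p.2) (x, y)) :
    DifferentiableAt 𝕜 (fun y' => lineDeriv 𝕜 (k · y') x v) y := by
  have hfderiv : DifferentiableAt 𝕜 (fderiv 𝕜 (fun p : E × E => k p.1 p.2)) (x, y) :=
    (h.fderiv_right (m := 1) (by norm_num)).differentiableAt (by norm_num)
  have hfderiv_apply : DifferentiableAt 𝕜
      (fun y' => fderiv 𝕜 (fun p : E × E => k p.1 p.2) (x, y') (v, 0)) y :=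
    (hfderiv.comp y ((differentiableAt_const x).prodMk differentiableAt_id)).clm_apply
      (differentiableAt_const _)
  refine hfderiv_apply.congr_of_eventuallyEq ?_
  filter_upwards [h.eventually_hasLineDerivAt_fst] with y' hy' using hy'.lineDeriv

theorem lineDeriv_conformal_fst (hD : LineDifferentiableAt 𝕜 D x v)
    (hk : LineDifferentiableAt 𝕜 (k · y) x v) :
    lineDeriv 𝕜 (fun u => D u * D y * k u y) x v =
      lineDeriv 𝕜 D x v * D y * k x y + D x * D y * lineDeriv 𝕜 (k · y) x v :=
  ((hD.hasLineDerivAt.mul_const (D y)).mul hk.hasLineDerivAt).lineDeriv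

theorem lineDeriv_lineDeriv_conformal (hDv : LineDifferentiableAt 𝕜 D x v)
    (hDw : LineDifferentiableAt 𝕜 D x w) (hk₁ : ∀ᶠ y in 𝓝 x, LineDifferentiableAt 𝕜 (k · y) x v)
    (hk₂ : LineDifferentiableAt 𝕜 (k x ·) x w)
    (hk₁₂ : LineDifferentiableAt 𝕜 (fun y => lineDeriv 𝕜 (k · y) x v) x w) :
    lineDeriv 𝕜 (fun y => lineDeriv 𝕜 (fun u => D u * D y * k u y) x v) x w =
      D x ^ 2 * lineDeriv 𝕜 (fun y => lineDeriv 𝕜 (k · y) x v) x w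
        + lineDeriv 𝕜 D x v * lineDeriv 𝕜 D x w * k x x
        + D x * (lineDeriv 𝕜 D x v * lineDeriv 𝕜 (k x ·) x w
          + lineDeriv 𝕜 D x w * lineDeriv 𝕜 (k · x) x v) := by
  have hinner : (fun y => lineDeriv 𝕜 (fun u => D u * D y * k u y) x v) =ᶠ[𝓝 x]
      fun y => D y * (lineDeriv 𝕜 D x v * k x y + D x * lineDeriv 𝕜 (k · y) x v) := by
    filter_upwards [hk₁] with y hy
    rw [lineDeriv_conformal_fst hDv hy]
    ring
  rw [hinner.lineDeriv_eq, (hDw.hasLineDerivAt.mul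
    ((hk₂.hasLineDerivAt.const_mul _).add (hk₁₂.hasLineDerivAt.const_mul _))).lineDeriv]
  ring

end Kernel

theorem pderivFst_eq_lineDeriv {n : ℕ} (k : (Fin n → ℝ) → (Fin n → ℝ) → ℝ) (i : Fin n)
    (x y : Fin n → ℝ) : pderivFst k i x y = lineDeriv ℝ (k · y) x (Pi.single i 1) :=
  rfl

theorem pderiv'_eq_lineDeriv {n : ℕ} (D : (Fin n → ℝ) → ℝ) (i : Fin n) (x : Fin n → ℝ) :
    pderiv' D i x = lineDeriv ℝ D x (Pi.single i 1) :=
  rfl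

theorem inducedMetric_eq_lineDeriv {n : ℕ} (k : (Fin n → ℝ) → (Fin n → ℝ) → ℝ) (i j : Fin n)
    (x : Fin n → ℝ) :
    inducedMetric k i j x =
      lineDeriv ℝ (fun y => lineDeriv ℝ (k · y) x (Pi.single i 1)) x (Pi.single j 1) :=
  rfl

/-- For a symmetric `C²` kernel `k` on an open set `X ⊆ ℝⁿ` and a
`C¹` function `D`, the metric induced by the conformally transformed kernel
`k̃(x,y) = D(x)D(y)k(x,y)` satisfies
`g̃_ij(x) = D(x)²g_ij(x) + D_i(x)D_j(x)k(x,x) + D(x)(D_i(x)k_j(x,x) + D_j(x)k_i(x,x))`. -/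
theorem conformal_inducedMetric {n : ℕ} (X : Set (Fin n → ℝ)) (hX : IsOpen X)
    (k : (Fin n → ℝ) → (Fin n → ℝ) → ℝ) (D : (Fin n → ℝ) → ℝ)
    (hsymm : ∀ x ∈ X, ∀ y ∈ X, k x y = k y x)
    (hk : ContDiffOn ℝ 2 (fun p : (Fin n → ℝ) × (Fin n → ℝ) => k p.1 p.2) (X ×ˢ X))
    (hD : ContDiffOn ℝ 1 D X) (x : Fin n → ℝ) (hx : x ∈ X) (i j : Fin n) :
    inducedMetric (fun u v => D u * D v * k u v) i j x =
      D x ^ 2 * inducedMetric k i j x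
        + pderiv' D i x * pderiv' D j x * k x x
        + D x * (pderiv' D i x * pderivFst k j x x
            + pderiv' D j x * pderivFst k i x x) := by
  have hkx : ContDiffAt ℝ 2 (fun p : (Fin n → ℝ) × (Fin n → ℝ) => k p.1 p.2) (x, x) :=
    hk.contDiffAt ((hX.prod hX).mem_nhds ⟨hx, hx⟩)
  have hDx : DifferentiableAt ℝ D x :=
    (hD.contDiffAt (hX.mem_nhds hx)).differentiableAt one_ne_zero
  have hk_symm : (k x ·) =ᶠ[𝓝 x] (k · x) := by
    filter_upwards [hX.mem_nhds hx] with y hy using hsymm x hx y hy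
  simp only [pderivFst_eq_lineDeriv, pderiv'_eq_lineDeriv, inducedMetric_eq_lineDeriv]
  rw [lineDeriv_lineDeriv_conformal hDx.lineDifferentiableAt hDx.lineDifferentiableAt
      ((hkx.eventually_hasLineDerivAt_fst).mono fun y hy => hy.lineDifferentiableAt)
      ((hkx.eventually_hasLineDerivAt_fst).self_of_nhds.congr_of_eventuallyEq
        hk_symm).lineDifferentiableAt
      (hkx.differentiableAt_lineDeriv_fst).lineDifferentiableAt, hk_symm.lineDeriv_eq]
end
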